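/- Let x > 0, X = 2x, h > 0 with h/(X−x) =: δ ∈ (0,1/2), and let f : ℝ → [0,1] be the piecewise linear function that is 0 outside (x,X), 1 on [x+h, X−h], and linear on [x,x+h] and [X−h,X]. Let φ₁ : [0,2x] → ℝ be Lipschitz with constant 1/2, z₁(t) = t+iφ₁(t), A = z₁(x). Then |(2πi)^{-1}∫ₓ^X f(t)·z₁'(t)/(z₁(t)−A) dt| ≥ (1/(2π))·log((1−2δ)/(2δ)) − 2; in particular the integral tends to ∞ in modulus as δ → 0. -/

import Mathlib

/-!
Write `γ t = t + i φ t` and `A = γ x`. Since `Re (γ t - A) = t - x` and `‖γ'‖ ≤ 3/2`, the ramp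
bound `f t ≤ (t - x)/h` cancels the pole at `x`: the integrand is bounded by `3/(2h)` on `(x, X]`,
so each ramp contributes at most `3/2`. On the plateau `f = 1` and `Re (γ'/(γ - A))` is the
derivative of `log ‖γ - A‖`, so the real part of the middle integral is
`log ‖γ (X - h) - A‖ - log ‖γ (x + h) - A‖ ≥ log ((X - x - h) / (3h/2))`.
-/

open Set MeasureTheory Complex

theorem hasDerivAt_log_norm {g : ℝ → ℂ} {g' : ℂ} {t : ℝ} (hg : HasDerivAt g g' t)
    (h0 : g t ≠ 0) : HasDerivAt (fun s => Real.log ‖g s‖) (g' / g t).re t := by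
  have hsq : HasDerivAt (fun s => Real.log (‖g s‖ ^ 2) / 2)
      (2 * inner ℝ (g t) g' / ‖g t‖ ^ 2 / 2) t :=
    (hg.norm_sq.log (by positivity)).div_const 2
  convert hsq using 1
  · ext s
    rw [Real.log_pow]; ring
  · rw [Complex.div_re, Complex.inner, ← Complex.normSq_eq_norm_sq]
    simp only [Complex.mul_re, Complex.conj_re, Complex.conj_im]
    ring

theorem re_intervalIntegral_div_eq_log_norm_sub {g g' : ℝ → ℂ} {a b : ℝ}
    (hg : ∀ t ∈ uIcc a b, HasDerivAt g (g' t) t) (h0 : ∀ t ∈ uIcc a b, g t ≠ 0)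
    (hint : IntervalIntegrable (fun t => g' t / g t) volume a b) :
    (∫ t in a..b, g' t / g t).re = Real.log ‖g b‖ - Real.log ‖g a‖ := by
  have hre := reCLM.intervalIntegral_comp_comm hint
  rw [reCLM_apply] at hre
  rw [← hre]
  exact intervalIntegral.integral_eq_sub_of_hasDerivAt
    (fun t ht => hasDerivAt_log_norm (hg t ht) (h0 t ht)) ⟨hint.1.re, hint.2.re⟩

theorem neg_mul_le_re_intervalIntegral {F : ℝ → ℂ} {a b C : ℝ} (hab : a ≤ b)
    (hC : ∀ t ∈ Ioc a b, ‖F t‖ ≤ C) : -(C * (b - a)) ≤ (∫ t in a..b, F t).re := by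
  have hnorm := intervalIntegral.norm_integral_le_of_norm_le_const (a := a) (b := b)
    (fun t ht => hC t (uIoc_of_le hab ▸ ht))
  rw [abs_of_nonneg (sub_nonneg.2 hab)] at hnorm
  linarith [neg_abs_le (∫ t in a..b, F t).re, Complex.abs_re_le_norm (∫ t in a..b, F t)]

theorem log_norm_sub_le_re_intervalIntegral {F g g' : ℝ → ℂ} {a b h C : ℝ}
    (hh : 0 ≤ h) (hab : a + h ≤ b - h) (hint : IntervalIntegrable F volume a b)
    (hC : ∀ t ∈ Ioc a b, ‖F t‖ ≤ C) (hF : ∀ t ∈ Icc (a + h) (b - h), F t = g' t / g t)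
    (hg : ∀ t ∈ Icc (a + h) (b - h), HasDerivAt g (g' t) t)
    (h0 : ∀ t ∈ Icc (a + h) (b - h), g t ≠ 0) :
    Real.log ‖g (b - h)‖ - Real.log ‖g (a + h)‖ - 2 * (C * h) ≤ (∫ t in a..b, F t).re := by
  have hsub : ∀ {c d}, a ≤ c → c ≤ d → d ≤ b → IntervalIntegrable F volume c d :=
    fun hac hcd hdb => hint.mono_set (by
      rw [uIcc_of_le hcd, uIcc_of_le (hac.trans (hcd.trans hdb))]
      exact Icc_subset_Icc hac hdb)
  have hmid : ∫ t in (a + h)..(b - h), F t = ∫ t in (a + h)..(b - h), g' t / g t :=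
    intervalIntegral.integral_congr (fun t ht => hF t (uIcc_of_le hab ▸ ht))
  have hmid_int : IntervalIntegrable (fun t => g' t / g t) volume (a + h) (b - h) :=
    (hsub (by linarith) hab (by linarith)).congr
      (fun t ht => hF t (Ioc_subset_Icc_self (uIoc_of_le hab ▸ ht)))
  have hsplit : ∫ t in a..b, F t = (∫ t in a..(a + h), F t) + (∫ t in (a + h)..(b - h), F t)
      + ∫ t in (b - h)..b, F t := by
    rw [intervalIntegral.integral_add_adjacent_intervals (hsub le_rfl (by linarith) (by linarith))
        (hsub (by linarith) hab (by linarith)),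
      intervalIntegral.integral_add_adjacent_intervals (hsub le_rfl (by linarith) (by linarith))
        (hsub (by linarith) (by linarith) le_rfl)]
  rw [hsplit, hmid, add_re, add_re,
    re_intervalIntegral_div_eq_log_norm_sub (fun t ht => hg t (uIcc_of_le hab ▸ ht))
      (fun t ht => h0 t (uIcc_of_le hab ▸ ht)) hmid_int]
  have hleft := neg_mul_le_re_intervalIntegral (F := F) (a := a) (b := a + h) (by linarith)
    (fun t ht => hC t ⟨ht.1, by linarith [ht.2]⟩)
  have hright := neg_mul_le_re_intervalIntegral (F := F) (a := b - h) (b := b) (by linarith)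
    (fun t ht => hC t ⟨by linarith [ht.1], ht.2⟩)
  linarith

theorem abs_le_div_of_trapezoid {f : ℝ → ℝ} {a b h : ℝ} (hh : 0 < h)
    (hf1 : ∀ t ∈ Icc (a + h) (b - h), f t = 1)
    (hfl : ∀ t ∈ Icc a (a + h), f t = (t - a) / h)
    (hfr : ∀ t ∈ Icc (b - h) b, f t = (b - t) / h) :
    ∀ t ∈ Icc a b, |f t| ≤ (t - a) / h := by
  intro t ⟨hat, htb⟩
  rcases le_total t (a + h) with hl | hl
  · rw [hfl t ⟨hat, hl⟩, abs_of_nonneg (div_nonneg (by linarith) hh.le)]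
  rcases le_total t (b - h) with hr | hr
  · rw [hf1 t ⟨hl, hr⟩, abs_one, le_div_iff₀ hh]
    linarith
  · rw [hfr t ⟨hr, htb⟩, abs_of_nonneg (div_nonneg (by linarith) hh.le)]
    exact div_le_div_of_nonneg_right (by linarith) hh.le

theorem continuousOn_of_trapezoid {f : ℝ → ℝ} {a b h : ℝ} (hh : 0 ≤ h) (hab : a + h ≤ b - h)
    (hf1 : ∀ t ∈ Icc (a + h) (b - h), f t = 1)
    (hfl : ∀ t ∈ Icc a (a + h), f t = (t - a) / h)
    (hfr : ∀ t ∈ Icc (b - h) b, f t = (b - t) / h) :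
    ContinuousOn f (Icc a b) := by
  rw [← Icc_union_Icc_eq_Icc (by linarith : a ≤ a + h) (by linarith : a + h ≤ b),
    ← Icc_union_Icc_eq_Icc hab (by linarith : b - h ≤ b)]
  refine ContinuousOn.union_of_isClosed ?_ ?_ isClosed_Icc
    (isClosed_Icc.union isClosed_Icc)
  · exact (by fun_prop : Continuous fun t => (t - a) / h).continuousOn.congr hfl
  · refine ContinuousOn.union_of_isClosed ?_ ?_ isClosed_Icc isClosed_Icc
    · exact continuousOn_const.congr hf1
    · exact (by fun_prop : Continuous fun t => (b - t) / h).continuousOn.congr hfr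

theorem norm_one_add_mul_I_le (c : ℝ) : ‖1 + (c : ℂ) * I‖ ≤ 1 + |c| := by
  simpa using norm_add_le (1 : ℂ) ((c : ℂ) * I)

theorem sub_le_norm_graph_sub (φ : ℝ → ℝ) (s t : ℝ) :
    t - s ≤ ‖((t : ℂ) + (φ t : ℂ) * I) - ((s : ℂ) + (φ s : ℂ) * I)‖ := by
  simpa using Complex.re_le_norm (((t : ℂ) + (φ t : ℂ) * I) - ((s : ℂ) + (φ s : ℂ) * I))

theorem norm_graph_sub_le (φ : ℝ → ℝ) (s t : ℝ) :
    ‖((t : ℂ) + (φ t : ℂ) * I) - ((s : ℂ) + (φ s : ℂ) * I)‖ ≤ |t - s| + |φ t - φ s| := by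
  have hsplit : ((t : ℂ) + (φ t : ℂ) * I) - ((s : ℂ) + (φ s : ℂ) * I)
      = ((t - s : ℝ) : ℂ) + ((φ t - φ s : ℝ) : ℂ) * I := by
    push_cast; ring
  rw [hsplit]
  refine (norm_add_le _ _).trans_eq ?_
  rw [norm_mul, Complex.norm_I, mul_one, Complex.norm_real, Complex.norm_real, Real.norm_eq_abs,
    Real.norm_eq_abs]

theorem hasDerivAt_graph_sub {φ : ℝ → ℝ} {d t : ℝ} (s : ℝ) (hφ : HasDerivAt φ d t) :
    HasDerivAt (fun u : ℝ => ((u : ℂ) + (φ u : ℂ) * I) - ((s : ℂ) + (φ s : ℂ) * I))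
      (1 + (d : ℂ) * I) t :=
  (((hasDerivAt_id t).ofReal_comp).add (hφ.ofReal_comp.mul_const I)).sub_const _

theorem norm_graph_integrand_le (φ : ℝ → ℝ) {c d s t h : ℝ} (hh : 0 < h) (hst : s < t)
    (hc : |c| ≤ (t - s) / h) (hd : |d| ≤ 1 / 2) :
    ‖(c : ℂ) * (1 + (d : ℂ) * I) / (((t : ℂ) + (φ t : ℂ) * I) - ((s : ℂ) + (φ s : ℂ) * I))‖
      ≤ 3 / (2 * h) := by
  have hg := sub_le_norm_graph_sub φ s t
  rw [norm_div, div_le_iff₀ (by linarith), norm_mul, Complex.norm_real, Real.norm_eq_abs]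
  calc |c| * ‖1 + (d : ℂ) * I‖ ≤ (t - s) / h * (3 / 2) :=
        mul_le_mul hc ((norm_one_add_mul_I_le d).trans (by linarith)) (norm_nonneg _)
          (div_nonneg (by linarith) hh.le)
    _ = 3 / (2 * h) * (t - s) := by field_simp
    _ ≤ 3 / (2 * h) * _ := mul_le_mul_of_nonneg_left hg (by positivity)

theorem intervalIntegrable_graph_integrand {f φ φ' : ℝ → ℝ} {a b C : ℝ} (hab : a ≤ b)
    (hf : ContinuousOn f (Icc a b)) (hφ : ∀ t ∈ Icc a b, HasDerivAt φ (φ' t) t)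
    (hC : ∀ t ∈ Ioc a b, ‖(f t : ℂ) * (1 + (φ' t : ℂ) * I) /
      (((t : ℂ) + (φ t : ℂ) * I) - ((a : ℂ) + (φ a : ℂ) * I))‖ ≤ C) :
    IntervalIntegrable (fun t : ℝ => (f t : ℂ) * (1 + (φ' t : ℂ) * I) /
      (((t : ℂ) + (φ t : ℂ) * I) - ((a : ℂ) + (φ a : ℂ) * I))) volume a b := by
  have hφc : ContinuousOn φ (Icc a b) := fun t ht => (hφ t ht).continuousAt.continuousWithinAt
  -- `φ'` itself need not be measurable, but it agrees with `deriv φ` on `[a, b]`.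
  have hφ' : AEMeasurable φ' (volume.restrict (Icc a b)) :=
    (measurable_deriv φ).aemeasurable.congr
      ((ae_restrict_mem measurableSet_Icc).mono fun t ht => (hφ t ht).deriv)
  have hfm := hf.aemeasurable (μ := volume) measurableSet_Icc
  have hφm := hφc.aemeasurable (μ := volume) measurableSet_Icc
  refine (intervalIntegrable_const (c := C)).mono_fun' ?_ ?_
  · rw [uIoc_of_le hab]
    refine AEMeasurable.aestronglyMeasurable ?_
    exact AEMeasurable.mono_measure (by fun_prop) (Measure.restrict_mono Ioc_subset_Icc_self le_rfl)
  · rw [uIoc_of_le hab]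
    exact (ae_restrict_mem measurableSet_Ioc).mono hC

theorem log_div_le_log_norm_graph_sub {φ : ℝ → ℝ} {x X h : ℝ} (hh : 0 < h) (hxX : x + 2 * h < X)
    (hφ : |φ (x + h) - φ x| ≤ h / 2) :
    Real.log ((X - x - 2 * h) / (2 * h)) ≤
      Real.log ‖((X - h : ℝ) : ℂ) + (φ (X - h) : ℂ) * I - ((x : ℂ) + (φ x : ℂ) * I)‖ -
        Real.log ‖((x + h : ℝ) : ℂ) + (φ (x + h) : ℂ) * I - ((x : ℂ) + (φ x : ℂ) * I)‖ := by
  have hfar := sub_le_norm_graph_sub φ x (X - h)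
  have hnear_ge := sub_le_norm_graph_sub φ x (x + h)
  have hnear_le := norm_graph_sub_le φ x (x + h)
  rw [add_sub_cancel_left, abs_of_pos hh] at hnear_le
  calc Real.log ((X - x - 2 * h) / (2 * h))
      ≤ Real.log ((X - h - x) / (3 / 2 * h)) := by
        apply Real.log_le_log (div_pos (by linarith) (by linarith))
        rw [div_le_div_iff₀ (by linarith) (by linarith)]
        nlinarith
    _ = Real.log (X - h - x) - Real.log (3 / 2 * h) := Real.log_div (by linarith) (by positivity)
    _ ≤ _ := sub_le_sub (Real.log_le_log (by linarith) hfar)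
        (Real.log_le_log (by linarith) (by linarith))

theorem log_sub_le_re_intervalIntegral_trapezoid_graph {f φ φ' : ℝ → ℝ} {x X h : ℝ}
    (hh : 0 < h) (hxX : x + 2 * h < X)
    (hf1 : ∀ t ∈ Icc (x + h) (X - h), f t = 1)
    (hfl : ∀ t ∈ Icc x (x + h), f t = (t - x) / h)
    (hfr : ∀ t ∈ Icc (X - h) X, f t = (X - t) / h)
    (hder : ∀ t ∈ Icc x X, HasDerivAt φ (φ' t) t) (hlip : ∀ t ∈ Icc x X, |φ' t| ≤ 1 / 2) :
    Real.log ((X - x - 2 * h) / (2 * h)) - 3 ≤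
      (∫ t in x..X, (f t : ℂ) * (1 + (φ' t : ℂ) * I) /
        (((t : ℂ) + (φ t : ℂ) * I) - ((x : ℂ) + (φ x : ℂ) * I))).re := by
  have hbound : ∀ t ∈ Ioc x X, ‖(f t : ℂ) * (1 + (φ' t : ℂ) * I) /
      (((t : ℂ) + (φ t : ℂ) * I) - ((x : ℂ) + (φ x : ℂ) * I))‖ ≤ 3 / (2 * h) :=
    fun t ht => norm_graph_integrand_le φ hh ht.1
      (abs_le_div_of_trapezoid hh hf1 hfl hfr t (Ioc_subset_Icc_self ht))
      (hlip t (Ioc_subset_Icc_self ht))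
  have hint := intervalIntegrable_graph_integrand (by linarith)
    (continuousOn_of_trapezoid hh.le (by linarith) hf1 hfl hfr) hder hbound
  have hφ : |φ (x + h) - φ x| ≤ h / 2 := by
    have hmvt := (convex_Icc x X).norm_image_sub_le_of_norm_hasDerivWithin_le
      (fun t ht => (hder t ht).hasDerivWithinAt) (fun t ht => hlip t ht)
      (x := x) (y := x + h) ⟨le_rfl, by linarith⟩ ⟨by linarith, by linarith⟩
    rw [Real.norm_eq_abs, Real.norm_eq_abs, add_sub_cancel_left, abs_of_pos hh] at hmvt
    linarith
  have hre := log_norm_sub_le_re_intervalIntegral hh.le (by linarith) hint hbound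
    (fun t ht => by simp only [hf1 t ht, ofReal_one, one_mul])
    (fun t ht => hasDerivAt_graph_sub x (hder t ⟨by linarith [ht.1], by linarith [ht.2]⟩))
    (fun t ht => norm_pos_iff.1 ((by linarith [ht.1] : 0 < t - x).trans_le
      (sub_le_norm_graph_sub φ x t)))
  have hCh : 2 * (3 / (2 * h) * h) = 3 := by field_simp
  linarith [log_div_le_log_norm_graph_sub (X := X) hh hxX hφ]

theorem le_norm_inv_two_pi_I_mul {L : ℝ} {z : ℂ} (hz : L - 3 ≤ z.re) :
    1 / (2 * Real.pi) * L - 2 ≤ ‖(2 * (Real.pi : ℂ) * I)⁻¹ * z‖ := by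
  have hnorm : ‖2 * (Real.pi : ℂ) * I‖ = 2 * Real.pi := by simp [abs_of_pos Real.pi_pos]
  have hpi : 3 * (2 * Real.pi)⁻¹ ≤ 2 := by
    rw [← div_eq_mul_inv, div_le_iff₀ (by positivity)]
    linarith [Real.pi_gt_three]
  rw [norm_mul, norm_inv, hnorm, one_div]
  calc (2 * Real.pi)⁻¹ * L - 2 ≤ (2 * Real.pi)⁻¹ * (L - 3) := by linarith
    _ ≤ (2 * Real.pi)⁻¹ * ‖z‖ := by
      gcongr
      linarith [Complex.re_le_norm z]

theorem stmt_19_general (x X h δ : ℝ) (hx : 0 < x) (hX : X = 2 * x) (hh : 0 < h)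
    (hδ : δ = h / (X - x)) (hδ2 : δ < 1 / 2)
    (f : ℝ → ℝ)
    (hf1 : ∀ t ∈ Set.Icc (x + h) (X - h), f t = 1)
    (hfl : ∀ t ∈ Set.Icc x (x + h), f t = (t - x) / h)
    (hfr : ∀ t ∈ Set.Icc (X - h) X, f t = (X - t) / h)
    (φ₁ φ₁' : ℝ → ℝ)
    (hder : ∀ t ∈ Set.Icc 0 (2 * x), HasDerivAt φ₁ (φ₁' t) t)
    (hlip : ∀ t ∈ Set.Icc 0 (2 * x), |φ₁' t| ≤ 1 / 2) :
    (1 / (2 * Real.pi)) * Real.log ((1 - 2 * δ) / (2 * δ)) - 2 ≤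
      ‖(2 * (Real.pi : ℂ) * Complex.I)⁻¹ *
        ∫ t in x..X, (f t : ℂ) * (1 + (φ₁' t : ℂ) * Complex.I) /
          (((t : ℂ) + (φ₁ t : ℂ) * Complex.I) - ((x : ℂ) + (φ₁ x : ℂ) * Complex.I))‖ := by
  subst hX
  have hδx : δ = h / x := by rw [hδ]; ring_nf
  have hhx : 2 * h < x := by
    rw [hδx, div_lt_iff₀ hx] at hδ2
    linarith
  have harg : (1 - 2 * δ) / (2 * δ) = (2 * x - x - 2 * h) / (2 * h) := by
    rw [hδx]; field_simp; ring
  have hIcc : Icc x (2 * x) ⊆ Icc 0 (2 * x) := Icc_subset_Icc_left hx.le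
  rw [harg]
  exact le_norm_inv_two_pi_I_mul (log_sub_le_re_intervalIntegral_trapezoid_graph hh
    (by linarith) hf1 hfl hfr (fun t ht => hder t (hIcc ht)) fun t ht => hlip t (hIcc ht))

/-- Lower bound showing the Cauchy integral of the trapezoidal cutoff along the
graph blows up as `δ = h/(X−x) → 0`. -/
theorem stmt_19 (x X h δ : ℝ) (hx : 0 < x) (hX : X = 2 * x) (hh : 0 < h)
    (hδ : δ = h / (X - x)) (hδ2 : δ < 1 / 2)
    (f : ℝ → ℝ)
    (hf0 : ∀ t, t ≤ x ∨ X ≤ t → f t = 0)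
    (hf1 : ∀ t ∈ Set.Icc (x + h) (X - h), f t = 1)
    (hfl : ∀ t ∈ Set.Icc x (x + h), f t = (t - x) / h)
    (hfr : ∀ t ∈ Set.Icc (X - h) X, f t = (X - t) / h)
    (φ₁ φ₁' : ℝ → ℝ)
    (hder : ∀ t ∈ Set.Icc 0 (2 * x), HasDerivAt φ₁ (φ₁' t) t)
    (hlip : ∀ t ∈ Set.Icc 0 (2 * x), |φ₁' t| ≤ 1 / 2) :
    (1 / (2 * Real.pi)) * Real.log ((1 - 2 * δ) / (2 * δ)) - 2 ≤
      ‖(2 * (Real.pi : ℂ) * Complex.I)⁻¹ *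
        ∫ t in x..X, (f t : ℂ) * (1 + (φ₁' t : ℂ) * Complex.I) /
          (((t : ℂ) + (φ₁ t : ℂ) * Complex.I) - ((x : ℂ) + (φ₁ x : ℂ) * Complex.I))‖ :=
  stmt_19_general x X h δ hx hX hh hδ hδ2 f hf1 hfl hfr φ₁ φ₁' hder hlip
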